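/- Let G be an even-tempered well-tempered scoring game with gap_0(G) = 0 (i.e., every even-tempered subgame H satisfies L(H) ≥ R(H)). Then G ≳ 0 if and only if R(G) ≥ 0, where G ≳ 0 means L(G+X) ≥ L(X) and R(G+X) ≥ R(X) for all well-tempered games X. -/

import Mathlib

/-- Well-tempered scoring game trees: an integer (final score) or a position
with lists of Left and Right options. -/
inductive WT : Type where
  | int : ℤ → WT
  | node : List WT → List WT → WT

namespace WT

/-- Left options. -/
def lopts : WT → List WT
  | int _ => []
  | node L _ => L

/-- Right options. -/
def ropts : WT → List WT
  | int _ => []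
  | node _ R => R

theorem sizeOf_lt_of_mem_lopts : ∀ {G g : WT}, g ∈ G.lopts → sizeOf g < sizeOf G := by
  intro G g h
  cases G with
  | int n => simp [lopts] at h
  | node L R =>
    simp only [lopts] at h
    have h1 := List.sizeOf_lt_of_mem h
    have h2 : sizeOf (WT.node L R) = 1 + sizeOf L + sizeOf R := by simp
    omega

theorem sizeOf_lt_of_mem_ropts : ∀ {G g : WT}, g ∈ G.ropts → sizeOf g < sizeOf G := by
  intro G g h
  cases G with
  | int n => simp [ropts] at h
  | node L R =>
    simp only [ropts] at h
    have h1 := List.sizeOf_lt_of_mem h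
    have h2 : sizeOf (WT.node L R) = 1 + sizeOf L + sizeOf R := by simp
    omega

/-- Disjunctive sum of two games. -/
def add (G H : WT) : WT :=
  match G, H with
  | int m, int n => int (m + n)
  | G, H =>
    node ((G.lopts.attach.map fun g => add g.1 H) ++ (H.lopts.attach.map fun h => add G h.1))
         ((G.ropts.attach.map fun g => add g.1 H) ++ (H.ropts.attach.map fun h => add G h.1))
termination_by sizeOf G + sizeOf H
decreasing_by
  all_goals
    first
      | (have := sizeOf_lt_of_mem_lopts g.2; omega)
      | (have := sizeOf_lt_of_mem_lopts h.2; omega)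
      | (have := sizeOf_lt_of_mem_ropts g.2; omega)
      | (have := sizeOf_lt_of_mem_ropts h.2; omega)

/-- Negation of a game: swap players and negate scores. -/
def neg : WT → WT
  | int n => int (-n)
  | node L R =>
    node ((WT.node L R).ropts.attach.map fun g => neg g.1)
         ((WT.node L R).lopts.attach.map fun g => neg g.1)
termination_by G => sizeOf G
decreasing_by
  all_goals
    first
      | exact sizeOf_lt_of_mem_lopts g.2
      | exact sizeOf_lt_of_mem_ropts g.2

def lmax : List ℤ → ℤ
  | [] => 0
  | x :: xs => xs.foldl max x

def lmin : List ℤ → ℤ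
  | [] => 0
  | x :: xs => xs.foldl min x

/-- The pair (left outcome, right outcome). -/
def out : WT → ℤ × ℤ
  | int n => (n, n)
  | node L R =>
    (lmax ((WT.node L R).lopts.attach.map fun g => (out g.1).2),
     lmin ((WT.node L R).ropts.attach.map fun g => (out g.1).1))
termination_by G => sizeOf G
decreasing_by
  all_goals
    first
      | exact sizeOf_lt_of_mem_lopts g.2
      | exact sizeOf_lt_of_mem_ropts g.2

/-- Left outcome L(G): optimal score when Left moves first. -/
def Lout (G : WT) : ℤ := G.out.1

/-- Right outcome R(G): optimal score when Right moves first. -/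
def Rout (G : WT) : ℤ := G.out.2

/-- `IsWT G p` : `G` is a well-tempered game of parity `p`
(`false` = even-tempered, `true` = odd-tempered). -/
inductive IsWT : WT → Bool → Prop where
  | int (n : ℤ) : IsWT (WT.int n) false
  | node {L R : List WT} {p : Bool} (hL : L ≠ []) (hR : R ≠ [])
      (hLp : ∀ g ∈ L, IsWT g p) (hRp : ∀ g ∈ R, IsWT g p) :
      IsWT (WT.node L R) (!p)

/-- `G` is a well-tempered game (of some parity). -/
def Wt (G : WT) : Prop := ∃ p, IsWT G p

/-- Parity, computed structurally (`false` = even-tempered, `true` = odd-tempered;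
agrees with `IsWT` on well-tempered games). -/
def par : WT → Bool
  | int _ => false
  | node [] _ => true
  | node (g :: _) _ => !(par g)

/-- Final score under optimal play when Left moves last. -/
def Lf (G : WT) : ℤ := if G.par then G.Lout else G.Rout

/-- Final score under optimal play when Right moves last. -/
def Rf (G : WT) : ℤ := if G.par then G.Rout else G.Lout

/-- `G ≲ H` : for every well-tempered `X`, `L(G+X) ≤ L(H+X)` and `R(G+X) ≤ R(H+X)`. -/
def Le (G H : WT) : Prop :=
  ∀ X : WT, X.Wt → (G.add X).Lout ≤ (H.add X).Lout ∧ (G.add X).Rout ≤ (H.add X).Rout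

/-- `G ≳ H`. -/
def Ge (G H : WT) : Prop := Le H G

/-- `G ≈ H` : equivalence of scoring games. -/
def Equiv (G H : WT) : Prop :=
  ∀ X : WT, X.Wt → (G.add X).Lout = (H.add X).Lout ∧ (G.add X).Rout = (H.add X).Rout

/-- `G` and `H` are well-tempered with the same parity. -/
def SamePar (G H : WT) : Prop := ∃ p, IsWT G p ∧ IsWT H p

/-- `G` takes values in `S`: every integer subgame lies in `S`. -/
inductive Valued (S : Set ℤ) : WT → Prop where
  | int {n : ℤ} : n ∈ S → Valued S (WT.int n)
  | node {L R : List WT} : (∀ g ∈ L, Valued S g) → (∀ g ∈ R, Valued S g) →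
      Valued S (WT.node L R)

/-- `Subgame H G` : `H` is a subgame of `G`. -/
inductive Subgame : WT → WT → Prop where
  | refl (G : WT) : Subgame G G
  | left {H G' : WT} {L R : List WT} : G' ∈ L → Subgame H G' → Subgame H (WT.node L R)
  | right {H G' : WT} {L R : List WT} : G' ∈ R → Subgame H G' → Subgame H (WT.node L R)

/-- `gap G p` : supremum of `R(H) - L(H)` over subgames `H` of `G` of parity `p`
(as an element of `WithBot ℤ`; the supremum of the empty set is `⊥ = -∞`). -/
noncomputable def gap (G : WT) (p : Bool) : WithBot ℤ :=
  sSup {x : WithBot ℤ | ∃ H : WT, Subgame H G ∧ IsWT H p ∧ x = ((H.Rout - H.Lout : ℤ) : WithBot ℤ)}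

/-- Heating by `t`. -/
def heat (t : ℤ) : WT → WT
  | int n => int n
  | node L R =>
    node ((WT.node L R).lopts.attach.map fun g => (WT.int t).add (heat t g.1))
         ((WT.node L R).ropts.attach.map fun g => (WT.int (-t)).add (heat t g.1))
termination_by G => sizeOf G
decreasing_by
  all_goals
    first
      | exact sizeOf_lt_of_mem_lopts g.2
      | exact sizeOf_lt_of_mem_ropts g.2

end WT

/-! Induction on `G` and, for fixed `G`, on `X`. When `X` is a number `n`,
`L(G + n) = L(G) + n ≥ R(G) + n ≥ n`. Otherwise every move in `X` is answered by the same move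
in `G + X`, and the only new threat is Right's move to `G^R + X`: since `L(G^R) ≥ R(G) ≥ 0`, Left
has a reply `G^{RL}` with `R(G^{RL}) ≥ 0`, so by induction `L(G^R + X) ≥ R(G^{RL} + X) ≥ R(X)`.
The condition `gap₀(G) = 0` enters as `R(H) ≤ L(H)` for all even-tempered subgames `H`, a form
inherited by `G^{RL}`. Conversely, `X = 0` gives `R(G) ≥ 0`. -/

namespace WT

section ListExtrema

variable {l : List ℤ} {a c : ℤ}

lemma max?_eq_some_lmax (hl : l ≠ []) : l.max? = some (lmax l) := by
  cases l with
  | nil => exact absurd rfl hl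
  | cons x xs => exact List.max?_cons'

lemma min?_eq_some_lmin (hl : l ≠ []) : l.min? = some (lmin l) := by
  cases l with
  | nil => exact absurd rfl hl
  | cons x xs => exact List.min?_cons'

lemma lmax_mem (hl : l ≠ []) : lmax l ∈ l :=
  (List.max?_eq_some_iff.1 (max?_eq_some_lmax hl)).1

lemma lmin_mem (hl : l ≠ []) : lmin l ∈ l :=
  (List.min?_eq_some_iff.1 (min?_eq_some_lmin hl)).1

lemma le_lmax (h : a ∈ l) : a ≤ lmax l :=
  (List.max?_eq_some_iff.1 (max?_eq_some_lmax (List.ne_nil_of_mem h))).2 a h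

lemma lmin_le (h : a ∈ l) : lmin l ≤ a :=
  (List.min?_eq_some_iff.1 (min?_eq_some_lmin (List.ne_nil_of_mem h))).2 a h

lemma lmax_le (hl : l ≠ []) (h : ∀ b ∈ l, b ≤ c) : lmax l ≤ c :=
  h _ (lmax_mem hl)

lemma le_lmin (hl : l ≠ []) (h : ∀ b ∈ l, c ≤ b) : c ≤ lmin l :=
  h _ (lmin_mem hl)

lemma lmax_map_add {α : Type*} {xs : List α} (hxs : xs ≠ []) {f g : α → ℤ} {n : ℤ}
    (h : ∀ x ∈ xs, f x = g x + n) : lmax (xs.map f) = lmax (xs.map g) + n := by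
  obtain ⟨x, hx, hgx⟩ := List.mem_map.1 (lmax_mem (l := xs.map g) (mt List.map_eq_nil_iff.1 hxs))
  refine le_antisymm (lmax_le (mt List.map_eq_nil_iff.1 hxs) ?_) ?_
  · simp only [List.mem_map, forall_exists_index, and_imp, forall_apply_eq_imp_iff₂]
    intro y hy
    rw [h y hy]
    exact (add_le_add_iff_right n).2 (le_lmax (List.mem_map_of_mem hy))
  · rw [← hgx, ← h x hx]
    exact le_lmax (List.mem_map_of_mem hx)

lemma lmin_map_add {α : Type*} {xs : List α} (hxs : xs ≠ []) {f g : α → ℤ} {n : ℤ}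
    (h : ∀ x ∈ xs, f x = g x + n) : lmin (xs.map f) = lmin (xs.map g) + n := by
  obtain ⟨x, hx, hgx⟩ := List.mem_map.1 (lmin_mem (l := xs.map g) (mt List.map_eq_nil_iff.1 hxs))
  refine le_antisymm ?_ (le_lmin (mt List.map_eq_nil_iff.1 hxs) ?_)
  · rw [← hgx, ← h x hx]
    exact lmin_le (List.mem_map_of_mem hx)
  · simp only [List.mem_map, forall_exists_index, and_imp, forall_apply_eq_imp_iff₂]
    intro y hy
    rw [h y hy]
    exact (add_le_add_iff_right n).2 (lmin_le (List.mem_map_of_mem hy))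

end ListExtrema

@[simp] lemma Lout_int (n : ℤ) : (int n).Lout = n := by simp [Lout, out]

@[simp] lemma Rout_int (n : ℤ) : (int n).Rout = n := by simp [Rout, out]

lemma Lout_node (L R : List WT) : (node L R).Lout = lmax (L.map Rout) := by
  simp only [Lout, out, lopts, List.map_subtype, List.unattach_attach]
  rfl

lemma Rout_node (L R : List WT) : (node L R).Rout = lmin (R.map Lout) := by
  simp only [Rout, out, ropts, List.map_subtype, List.unattach_attach]
  rfl

section

variable {G X Y Z : WT}

lemma Rout_le_Lout_of_mem_lopts (h : Y ∈ Z.lopts) : Y.Rout ≤ Z.Lout := by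
  cases Z with
  | int n => simp [lopts] at h
  | node L R => exact (Lout_node L R).symm ▸ le_lmax (List.mem_map_of_mem h)

lemma Rout_le_Lout_of_mem_ropts (h : Y ∈ Z.ropts) : Z.Rout ≤ Y.Lout := by
  cases Z with
  | int n => simp [ropts] at h
  | node L R => exact (Rout_node L R).symm ▸ lmin_le (List.mem_map_of_mem h)

lemma exists_mem_lopts_Lout_le_Rout (h : Z.lopts ≠ []) : ∃ Y ∈ Z.lopts, Z.Lout ≤ Y.Rout := by
  cases Z with
  | int n => simp [lopts] at h
  | node L R =>
    obtain ⟨Y, hY, hYZ⟩ := List.mem_map.1 (lmax_mem (l := L.map Rout) (mt List.map_eq_nil_iff.1 h))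
    exact ⟨Y, hY, by rw [Lout_node, ← hYZ]⟩

lemma Lout_le_of_forall_mem_lopts {c : ℤ} (hZ : Z.lopts ≠ []) (h : ∀ Y ∈ Z.lopts, Y.Rout ≤ c) :
    Z.Lout ≤ c := by
  cases Z with
  | int n => simp [lopts] at hZ
  | node L R =>
    rw [Lout_node]
    exact lmax_le (mt List.map_eq_nil_iff.1 hZ) (by simpa [lopts] using h)

lemma le_Rout_of_forall_mem_ropts {c : ℤ} (hZ : Z.ropts ≠ []) (h : ∀ Y ∈ Z.ropts, c ≤ Y.Lout) :
    c ≤ Z.Rout := by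
  cases Z with
  | int n => simp [ropts] at hZ
  | node L R =>
    rw [Rout_node]
    exact le_lmin (mt List.map_eq_nil_iff.1 hZ) (by simpa [ropts] using h)

lemma lopts_add (G X : WT) :
    (G.add X).lopts = G.lopts.map (·.add X) ++ X.lopts.map G.add := by
  cases G <;> cases X <;> rw [add] <;> simp [lopts]

lemma ropts_add (G X : WT) :
    (G.add X).ropts = G.ropts.map (·.add X) ++ X.ropts.map G.add := by
  cases G <;> cases X <;> rw [add] <;> simp [ropts]

lemma node_add_int (L R : List WT) (n : ℤ) :
    (node L R).add (int n) = node (L.map (·.add (int n))) (R.map (·.add (int n))) := by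
  rw [add] <;> simp [lopts, ropts]

lemma outcomes_add_int {p : Bool} (hG : IsWT G p) (n : ℤ) :
    (G.add (int n)).Lout = G.Lout + n ∧ (G.add (int n)).Rout = G.Rout + n := by
  induction hG with
  | int m => simp [add]
  | node hL hR _ _ ihL ihR =>
    rw [node_add_int, Lout_node, Rout_node, Lout_node, Rout_node, List.map_map, List.map_map]
    exact ⟨lmax_map_add hL fun g hg => (ihL g hg).2, lmin_map_add hR fun g hg => (ihR g hg).1⟩

lemma IsWT.mem_lopts {p : Bool} (hG : IsWT G p) (h : Y ∈ G.lopts) : IsWT Y (!p) := by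
  cases hG with
  | int n => simp [lopts] at h
  | node _ _ hLp _ => simpa using hLp Y h

lemma IsWT.mem_ropts {p : Bool} (hG : IsWT G p) (h : Y ∈ G.ropts) : IsWT Y (!p) := by
  cases hG with
  | int n => simp [ropts] at h
  | node _ _ _ hRp => simpa using hRp Y h

lemma IsWT.lopts_ne_nil (hG : IsWT G true) : G.lopts ≠ [] := by
  generalize hp : true = p at hG
  cases hG with
  | int n => cases hp
  | node hL _ _ _ => exact hL

lemma Subgame.trans {H : WT} (hHY : Subgame H Y) (hYG : Subgame Y G) : Subgame H G := by
  induction hYG with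
  | refl => exact hHY
  | left hm _ ih => exact .left hm ih
  | right hm _ ih => exact .right hm ih

lemma Subgame.of_mem_lopts (h : Y ∈ G.lopts) : Subgame Y G := by
  cases G with
  | int n => simp [lopts] at h
  | node L R => exact .left h (.refl Y)

lemma Subgame.of_mem_ropts (h : Y ∈ G.ropts) : Subgame Y G := by
  cases G with
  | int n => simp [ropts] at h
  | node L R => exact .right h (.refl Y)

theorem finite_setOf_subgame : ∀ G : WT, {H | Subgame H G}.Finite
  | int n => (Set.finite_singleton (int n)).subset fun H h => by cases h; rfl
  | node L R => by
    refine ((((List.finite_toSet L).biUnion fun g hg => finite_setOf_subgame g).union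
      ((List.finite_toSet R).biUnion fun g hg => finite_setOf_subgame g)).insert (node L R)).subset ?_
    rintro H (_ | ⟨hg, hH⟩ | ⟨hg, hH⟩)
    · exact Set.mem_insert _ _
    · exact Or.inr (Or.inl (Set.mem_biUnion hg hH))
    · exact Or.inr (Or.inr (Set.mem_biUnion hg hH))
decreasing_by
  · exact sizeOf_lt_of_mem_lopts hg
  · exact sizeOf_lt_of_mem_ropts hg

lemma sub_le_gap {H : WT} {p : Bool} (hH : Subgame H G) (hp : IsWT H p) :
    ((H.Rout - H.Lout : ℤ) : WithBot ℤ) ≤ G.gap p := by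
  -- `sSup` in `WithBot ℤ` is only meaningful on sets bounded above
  refine le_csSup (((finite_setOf_subgame G).image
    fun H : WT => ((H.Rout - H.Lout : ℤ) : WithBot ℤ)).subset ?_).bddAbove ⟨H, hH, hp, rfl⟩
  rintro _ ⟨H, hH, -, rfl⟩
  exact ⟨H, hH, rfl⟩

lemma Lout_le_Lout_add (hX : X.lopts ≠ []) (h : ∀ x ∈ X.lopts, x.Rout ≤ (G.add x).Rout) :
    X.Lout ≤ (G.add X).Lout :=
  Lout_le_of_forall_mem_lopts hX fun x hx =>
    (h x hx).trans (Rout_le_Lout_of_mem_lopts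
      ((lopts_add G X) ▸ List.mem_append_right _ (List.mem_map_of_mem hx)))

lemma Rout_le_Rout_add (hX : X.ropts ≠ []) (hXR : ∀ x ∈ X.ropts, x.Lout ≤ (G.add x).Lout)
    (hGR : ∀ g ∈ G.ropts, X.Rout ≤ (g.add X).Lout) : X.Rout ≤ (G.add X).Rout := by
  refine le_Rout_of_forall_mem_ropts (by simp [ropts_add, hX]) fun Y hY => ?_
  rcases List.mem_append.1 ((ropts_add G X) ▸ hY) with hY | hY
  · obtain ⟨g, hg, rfl⟩ := List.mem_map.1 hY
    exact hGR g hg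
  · obtain ⟨x, hx, rfl⟩ := List.mem_map.1 hY
    exact (Rout_le_Lout_of_mem_ropts hx).trans (hXR x hx)

end

theorem outcomes_le_add_of_Rout_nonneg {G X : WT} (hG : IsWT G false)
    (hI : ∀ H, Subgame H G → IsWT H false → H.Rout ≤ H.Lout) (hG0 : 0 ≤ G.Rout)
    {p : Bool} (hX : IsWT X p) : X.Lout ≤ (G.add X).Lout ∧ X.Rout ≤ (G.add X).Rout := by
  induction hX with
  | int n =>
    have hGLR := hI G (.refl G) hG
    simp only [outcomes_add_int hG, Lout_int, Rout_int]
    omega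
  | node hL hR hLp hRp ihL ihR =>
    refine ⟨Lout_le_Lout_add hL fun x hx => (ihL x hx).2,
      Rout_le_Rout_add hR (fun x hx => (ihR x hx).1) fun g hg => ?_⟩
    have hgw : IsWT g true := hG.mem_ropts hg
    obtain ⟨gL, hgL, hggL⟩ := exists_mem_lopts_Lout_le_Rout hgw.lopts_ne_nil
    have hgLG : Subgame gL G := (Subgame.of_mem_lopts hgL).trans (Subgame.of_mem_ropts hg)
    calc _ ≤ (gL.add _).Rout :=
          (outcomes_le_add_of_Rout_nonneg (hgw.mem_lopts hgL) (fun H hH => hI H (hH.trans hgLG))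
            (hG0.trans ((Rout_le_Lout_of_mem_ropts hg).trans hggL)) (.node hL hR hLp hRp)).2
      _ ≤ (g.add _).Lout := Rout_le_Lout_of_mem_lopts
          ((lopts_add g _) ▸ List.mem_append_left _ (List.mem_map_of_mem hgL))
termination_by sizeOf G
decreasing_by exact (sizeOf_lt_of_mem_lopts hgL).trans (sizeOf_lt_of_mem_ropts hg)

end WT

/-- for even-tempered G with gap₀(G) = 0, G ≳ 0 (i.e. L(G+X) ≥ L(X) and
R(G+X) ≥ R(X) for all well-tempered X) if and only if R(G) ≥ 0. -/
theorem ge_zero_iff (G : WT) (hG : WT.IsWT G false) (hgap : G.gap false = ((0 : ℤ) : WithBot ℤ)) :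
    (∀ X : WT, X.Wt → X.Lout ≤ (G.add X).Lout ∧ X.Rout ≤ (G.add X).Rout) ↔ 0 ≤ G.Rout := by
  constructor
  · intro h
    simpa [WT.outcomes_add_int hG] using (h (.int 0) ⟨false, .int 0⟩).2
  · rintro hG0 X ⟨p, hX⟩
    refine WT.outcomes_le_add_of_Rout_nonneg hG (fun H hH hHe => ?_) hG0 hX
    have hgapH := WT.sub_le_gap hH hHe
    rw [hgap, WithBot.coe_le_coe] at hgapH
    omega
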